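/- arXiv:1002.0994 — 2 statements merged into one kernel-verified Lean document; each statement's English description precedes it below -/
import Mathlib

section
/- Let $Q_0$ be a dyadic cube, $\mathcal{F}$ a finite family of pairwise disjoint dyadic subcubes of $Q_0$, and $\beta \in (0,1)$. Let $\overline{\mathcal{F}}$ be the family of maximal dyadic subcubes $R$ of $Q_0$ satisfying $|R \cap \bigcup_{Q\in\mathcal{F}} Q| > \beta |R|$, and let $\mathcal{F}_1$ be the family of dyadic parents of the cubes in $\overline{\mathcal{F}}$ (with the parent of $Q_0$ being $Q_0$ itself). Set $E = \bigcup_{Q\in\mathcal{F}} Q$ and $E_1 = \bigcup_{Q\in\mathcal{F}_1} Q$. Then either $|E_1| \ge \beta^{-1}|E|$, or $\beta^{-1}|E| > |Q_0|$ and $E_1 = Q_0$. -/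
open MeasureTheory Set

/-- A dyadic subcube of the unit cube `[0,1)^n`: a cube of rank `r` is determined by
an index `k : Fin n → ℕ` with `k i < 2^r`, and is the set
`∏ᵢ [kᵢ/2^r, (kᵢ+1)/2^r)`. -/
structure DyadicCube (n : ℕ) where
  rank : ℕ
  idx : Fin n → ℕ
  hidx : ∀ i, idx i < 2 ^ rank

/-- The subset of `ℝ^n` corresponding to a dyadic cube. -/
def DyadicCube.toSet {n : ℕ} (Q : DyadicCube n) : Set (Fin n → ℝ) :=
  {x | ∀ i, (Q.idx i : ℝ) / 2 ^ Q.rank ≤ x i ∧ x i < ((Q.idx i : ℝ) + 1) / 2 ^ Q.rank}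

/-- The dyadic parent of a cube: a cube of rank `r+1` has the unique cube of rank `r`
containing it as its parent; the parent of a cube of rank `0` (the unit cube itself)
is the cube itself. -/
def DyadicCube.parent {n : ℕ} (Q : DyadicCube n) : DyadicCube n :=
  match h : Q.rank with
  | 0 => Q
  | r + 1 =>
    ⟨r, fun i => Q.idx i / 2, fun i => by
      show Q.idx i / 2 < 2 ^ r
      have h2 := Q.hidx i
      rw [h, pow_succ] at h2
      omega⟩

/-- The unit cube `[0,1)^n`, the root of the dyadic family. -/
def unitCube (n : ℕ) : DyadicCube n :=
  ⟨0, fun _ => 0, fun _ => by norm_num⟩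

/-! Call a cube `R` dense if `β|R| < |R ∩ E|`. If `Q₀` is dense, it is a maximal dense cube and is
its own parent, so `E₁ = Q₀`. Otherwise every cube of `F` is dense, hence lies in a maximal dense
cube, so `E ⊆ E₁`, and the parent of a maximal dense cube is not dense. Since dyadic cubes are
nested or disjoint, `E₁` is the disjoint union of the maximal ones `A` among these parents, each
with `|E ∩ A| ≤ β|A|`; summing gives `|E| ≤ β|E₁|`. -/

open scoped ENNReal

theorem measure_le_mul_measure_sUnion {α : Type*} [MeasurableSpace α] {μ : Measure α}
    {E : Set α} {𝒜 : Set (Set α)} {c : ℝ≥0∞} (h𝒜 : 𝒜.Countable) (hd : 𝒜.Pairwise Disjoint)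
    (hm : ∀ A ∈ 𝒜, MeasurableSet A) (hE : E ⊆ ⋃₀ 𝒜) (hc : ∀ A ∈ 𝒜, μ (E ∩ A) ≤ c * μ A) :
    μ E ≤ c * μ (⋃₀ 𝒜) :=
  calc μ E = μ (⋃ A ∈ 𝒜, E ∩ A) := by
        rw [← Set.inter_iUnion₂, ← Set.sUnion_eq_biUnion, Set.inter_eq_left.mpr hE]
    _ ≤ ∑' A : 𝒜, μ (E ∩ A) := measure_biUnion_le μ h𝒜 _
    _ ≤ ∑' A : 𝒜, c * μ A := ENNReal.tsum_le_tsum fun A => hc A A.2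
    _ = c * μ (⋃₀ 𝒜) := by rw [ENNReal.tsum_mul_left, measure_sUnion h𝒜 hd hm]

theorem floor_two_pow_mul_eq_div (r d : ℕ) (t : ℝ) :
    ⌊(2 : ℝ) ^ r * t⌋₊ = ⌊(2 : ℝ) ^ (r + d) * t⌋₊ / 2 ^ d := by
  have : (2 : ℝ) ^ r * t = 2 ^ (r + d) * t / (2 ^ d : ℕ) := by
    push_cast
    field_simp
    ring
  rw [this, Nat.floor_div_natCast]

namespace DyadicCube

variable {n : ℕ}

theorem rank_idx_injective : Function.Injective fun Q : DyadicCube n => (Q.rank, Q.idx) := by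
  rintro ⟨r, k, hk⟩ ⟨s, l, hl⟩ h
  obtain ⟨rfl, rfl⟩ := Prod.mk.inj h
  rfl

instance : Countable (DyadicCube n) := rank_idx_injective.countable

theorem toSet_eq_pi (Q : DyadicCube n) :
    Q.toSet = Set.univ.pi fun i =>
      Set.Ico ((Q.idx i : ℝ) / 2 ^ Q.rank) ((Q.idx i + 1) / 2 ^ Q.rank) := by
  ext x
  simp [toSet]

theorem measurableSet_toSet (Q : DyadicCube n) : MeasurableSet Q.toSet := by
  rw [toSet_eq_pi]
  exact MeasurableSet.univ_pi fun _ => measurableSet_Ico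

theorem volume_toSet (Q : DyadicCube n) : volume Q.toSet = ((2 : ℝ≥0∞) ^ Q.rank)⁻¹ ^ n := by
  have hside (i : Fin n) :
      ((Q.idx i : ℝ) + 1) / 2 ^ Q.rank - Q.idx i / 2 ^ Q.rank = (2 ^ Q.rank)⁻¹ := by
    ring
  simp [toSet_eq_pi, volume_pi_pi, Real.volume_Ico, hside]

theorem volume_toSet_ne_zero (Q : DyadicCube n) : volume Q.toSet ≠ 0 := by
  simp [volume_toSet]

theorem volume_toSet_ne_top (Q : DyadicCube n) : volume Q.toSet ≠ ⊤ := by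
  simp [volume_toSet]

theorem mem_toSet_iff {Q : DyadicCube n} {x : Fin n → ℝ} :
    x ∈ Q.toSet ↔ ∀ i, 0 ≤ x i ∧ ⌊2 ^ Q.rank * x i⌋₊ = Q.idx i := by
  have hpos : (0 : ℝ) < 2 ^ Q.rank := by positivity
  simp only [toSet, Set.mem_ofPred_eq, div_le_iff₀' hpos, lt_div_iff₀' hpos]
  refine forall_congr' fun i => ?_
  rw [← mul_nonneg_iff_of_pos_left hpos]
  constructor
  · rintro ⟨h1, h2⟩
    have h0 := (Nat.cast_nonneg _).trans h1
    exact ⟨h0, (Nat.floor_eq_iff h0).mpr ⟨h1, h2⟩⟩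
  · rintro ⟨h0, hf⟩
    exact (Nat.floor_eq_iff h0).mp hf

theorem nonempty_toSet (Q : DyadicCube n) : Q.toSet.Nonempty :=
  ⟨fun i => Q.idx i / 2 ^ Q.rank,
    fun i => ⟨le_rfl, div_lt_div_of_pos_right (by linarith) (by positivity)⟩⟩

theorem toSet_subset_of_idx_eq_div {Q R : DyadicCube n} {d : ℕ} (hrank : R.rank = Q.rank + d)
    (hidx : ∀ i, Q.idx i = R.idx i / 2 ^ d) : R.toSet ⊆ Q.toSet := by
  intro x hx
  rw [mem_toSet_iff] at hx ⊢
  intro i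
  refine ⟨(hx i).1, ?_⟩
  rw [floor_two_pow_mul_eq_div _ d, ← hrank, (hx i).2, hidx]

theorem idx_eq_div_of_mem {Q R : DyadicCube n} {d : ℕ} (hrank : R.rank = Q.rank + d)
    {x : Fin n → ℝ} (hQ : x ∈ Q.toSet) (hR : x ∈ R.toSet) (i : Fin n) :
    Q.idx i = R.idx i / 2 ^ d := by
  rw [mem_toSet_iff] at hQ hR
  rw [← (hQ i).2, ← (hR i).2, hrank, floor_two_pow_mul_eq_div]

theorem toSet_subset_or_disjoint {Q R : DyadicCube n} (h : Q.rank ≤ R.rank) :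
    R.toSet ⊆ Q.toSet ∨ Disjoint Q.toSet R.toSet := by
  obtain ⟨d, hd⟩ := Nat.exists_eq_add_of_le h
  refine or_iff_not_imp_right.mpr fun hnd => ?_
  obtain ⟨x, hQ, hR⟩ := Set.not_disjoint_iff.mp hnd
  exact toSet_subset_of_idx_eq_div hd (idx_eq_div_of_mem hd hQ hR)

theorem toSet_subset_or_subset_or_disjoint (Q R : DyadicCube n) :
    Q.toSet ⊆ R.toSet ∨ R.toSet ⊆ Q.toSet ∨ Disjoint Q.toSet R.toSet := by
  rcases le_total Q.rank R.rank with h | h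
  · exact .inr (toSet_subset_or_disjoint h)
  · exact (toSet_subset_or_disjoint h).imp_right fun hd => .inr hd.symm

theorem toSet_eq_of_subset_of_rank_le {Q R : DyadicCube n} (h : Q.toSet ⊆ R.toSet)
    (hr : Q.rank ≤ R.rank) : Q.toSet = R.toSet := by
  refine (toSet_subset_or_disjoint hr).elim h.antisymm fun hd => ?_
  obtain ⟨x, hx⟩ := Q.nonempty_toSet
  exact (Set.disjoint_left.mp hd hx (h hx)).elim

theorem rank_le_of_toSet_subset (hn : n ≠ 0) {Q R : DyadicCube n} (h : Q.toSet ⊆ R.toSet) :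
    R.rank ≤ Q.rank := by
  have hvol := measure_mono (μ := volume) h
  rw [volume_toSet, volume_toSet, ENNReal.pow_le_pow_left_iff hn, ENNReal.inv_le_inv] at hvol
  exact (Nat.pow_le_pow_iff_right (by norm_num : 1 < 2)).mp (by exact_mod_cast hvol)

theorem toSet_subset_unitCube (Q : DyadicCube n) : Q.toSet ⊆ (unitCube n).toSet :=
  toSet_subset_of_idx_eq_div (d := Q.rank) (Nat.zero_add _).symm
    fun i => (Nat.div_eq_of_lt (Q.hidx i)).symm

theorem toSet_eq_unitCube_of_rank_eq_zero {Q : DyadicCube n} (h : Q.rank = 0) :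
    Q.toSet = (unitCube n).toSet :=
  toSet_eq_of_subset_of_rank_le Q.toSet_subset_unitCube h.le

theorem parent_of_rank_eq_zero {Q : DyadicCube n} (h : Q.rank = 0) : Q.parent = Q := by
  unfold parent
  split
  · rfl
  · omega

theorem rank_parent {Q : DyadicCube n} {r : ℕ} (h : Q.rank = r + 1) : Q.parent.rank = r := by
  unfold parent
  split
  · omega
  · dsimp only
    omega

theorem idx_parent {Q : DyadicCube n} {r : ℕ} (h : Q.rank = r + 1) (i : Fin n) :
    Q.parent.idx i = Q.idx i / 2 := by
  unfold parent
  split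
  · omega
  · rfl

theorem toSet_subset_parent (Q : DyadicCube n) : Q.toSet ⊆ Q.parent.toSet := by
  rcases h : Q.rank with _ | r
  · rw [parent_of_rank_eq_zero h]
  · exact toSet_subset_of_idx_eq_div (d := 1) (by rw [h, rank_parent h])
      fun i => by rw [idx_parent h, pow_one]

theorem toSet_eq_unitCube_of_parent_toSet_eq {Q : DyadicCube n}
    (h : Q.parent.toSet = Q.toSet) : Q.toSet = (unitCube n).toSet := by
  rcases hr : Q.rank with _ | r
  · exact toSet_eq_unitCube_of_rank_eq_zero hr
  rcases eq_or_ne n 0 with rfl | hn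
  · ext x
    simp [toSet]
  · have := rank_le_of_toSet_subset hn h.subset
    rw [rank_parent hr, hr] at this
    omega

def IsMaximal (p : DyadicCube n → Prop) (R : DyadicCube n) : Prop :=
  p R ∧ ∀ R' : DyadicCube n, R.toSet ⊆ R'.toSet → p R' → R'.toSet = R.toSet

section IsMaximal

variable {p : DyadicCube n → Prop}

theorem exists_isMaximal_superset {Q : DyadicCube n} (hQ : p Q) :
    ∃ R, IsMaximal p R ∧ Q.toSet ⊆ R.toSet := by
  obtain ⟨R, ⟨hpR, hQR⟩, hmin⟩ := (wellFounded_lt.onFun (f := rank)).has_min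
    {R | p R ∧ Q.toSet ⊆ R.toSet} ⟨Q, hQ, subset_rfl⟩
  refine ⟨R, ⟨hpR, fun R' hRR' hpR' => ?_⟩, hQR⟩
  exact (toSet_eq_of_subset_of_rank_le hRR' (not_lt.mp (hmin R' ⟨hpR', hQR.trans hRR'⟩))).symm

theorem IsMaximal.disjoint {R R' : DyadicCube n} (hR : IsMaximal p R) (hR' : IsMaximal p R')
    (hne : R.toSet ≠ R'.toSet) : Disjoint R.toSet R'.toSet := by
  rcases toSet_subset_or_subset_or_disjoint R R' with h | h | h
  · exact absurd (hR.2 R' h hR'.1).symm hne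
  · exact absurd (hR'.2 R h hR.1) hne
  · exact h

theorem IsMaximal.toSet_eq_unitCube_of_parent {R : DyadicCube n} (hR : IsMaximal p R)
    (hp : p R.parent) : R.toSet = (unitCube n).toSet :=
  toSet_eq_unitCube_of_parent_toSet_eq (hR.2 _ R.toSet_subset_parent hp)

theorem isMaximal_unitCube (hp : p (unitCube n)) : IsMaximal p (unitCube n) :=
  ⟨hp, fun R' h _ => R'.toSet_subset_unitCube.antisymm h⟩

-- Stated for the sets rather than the cubes: for `n = 0` all cubes have the same set.
theorem pairwise_disjoint_image_isMaximal :
    (toSet '' {R | IsMaximal p R}).Pairwise Disjoint := by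
  rintro _ ⟨R, hR, rfl⟩ _ ⟨R', hR', rfl⟩ hne
  exact hR.disjoint hR' hne

theorem biUnion_parent_isMaximal_eq_unitCube (hp : p (unitCube n)) :
    ⋃ R ∈ {R | IsMaximal p R}, R.parent.toSet = (unitCube n).toSet :=
  (Set.iUnion₂_subset fun R _ => R.parent.toSet_subset_unitCube).antisymm
    (Set.subset_iUnion₂_of_subset (unitCube n) (isMaximal_unitCube hp) subset_rfl)

theorem biUnion_subset_biUnion_parent_isMaximal {𝒮 : Set (DyadicCube n)} (h𝒮 : ∀ Q ∈ 𝒮, p Q) :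
    ⋃ Q ∈ 𝒮, Q.toSet ⊆ ⋃ R ∈ {R | IsMaximal p R}, R.parent.toSet :=
  Set.iUnion₂_subset fun Q hQ => by
    obtain ⟨R, hR, hQR⟩ := exists_isMaximal_superset (h𝒮 Q hQ)
    exact Set.subset_iUnion₂_of_subset R hR (hQR.trans R.toSet_subset_parent)

end IsMaximal

theorem sUnion_image_isMaximal (𝒮 : Set (DyadicCube n)) :
    ⋃₀ (toSet '' {R | IsMaximal (· ∈ 𝒮) R}) = ⋃ R ∈ 𝒮, R.toSet := by
  rw [Set.sUnion_image]
  refine subset_antisymm (Set.iUnion₂_subset fun R hR => Set.subset_biUnion_of_mem hR.1) ?_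
  refine Set.iUnion₂_subset fun R hR => ?_
  obtain ⟨R', hR', hsub⟩ := exists_isMaximal_superset (p := (· ∈ 𝒮)) hR
  exact hsub.trans (Set.subset_biUnion_of_mem (u := toSet) hR')

theorem volume_le_mul_volume_biUnion {E : Set (Fin n → ℝ)} {c : ℝ≥0∞} {𝒮 : Set (DyadicCube n)}
    (hE : E ⊆ ⋃ R ∈ 𝒮, R.toSet) (hc : ∀ R ∈ 𝒮, volume (E ∩ R.toSet) ≤ c * volume R.toSet) :
    volume E ≤ c * volume (⋃ R ∈ 𝒮, R.toSet) := by
  rw [← sUnion_image_isMaximal] at hE ⊢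
  refine measure_le_mul_measure_sUnion
    ((Set.countable_range toSet).mono (Set.image_subset_range _ _))
    pairwise_disjoint_image_isMaximal ?_ hE ?_
  · rintro _ ⟨R, -, rfl⟩
    exact R.measurableSet_toSet
  · rintro _ ⟨R, hR, rfl⟩
    exact hc R hR.1

theorem ofReal_mul_volume_lt_volume_inter {β : ℝ} (hβ : β < 1) {E : Set (Fin n → ℝ)}
    {Q : DyadicCube n} (h : Q.toSet ⊆ E) :
    ENNReal.ofReal β * volume Q.toSet < volume (Q.toSet ∩ E) := by
  rw [Set.inter_eq_left.mpr h]
  calc ENNReal.ofReal β * volume Q.toSet < 1 * volume Q.toSet :=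
        (ENNReal.mul_lt_mul_iff_left Q.volume_toSet_ne_zero Q.volume_toSet_ne_top).mpr
          (ENNReal.ofReal_lt_one.mpr hβ)
    _ = volume Q.toSet := one_mul _

end DyadicCube

theorem dyadic_lemma_general (n : ℕ) (β : ℝ) (hβ : β ∈ Set.Ioo (0:ℝ) 1)
    (F : Finset (DyadicCube n))
    (E : Set (Fin n → ℝ)) (hE : E = ⋃ Q ∈ F, Q.toSet)
    (Fbar : Set (DyadicCube n))
    (hFbar : Fbar = {R : DyadicCube n |
      ENNReal.ofReal β * volume R.toSet < volume (R.toSet ∩ E) ∧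
      ∀ R' : DyadicCube n, R.toSet ⊆ R'.toSet →
        ENNReal.ofReal β * volume R'.toSet < volume (R'.toSet ∩ E) →
        R'.toSet = R.toSet})
    (E1 : Set (Fin n → ℝ)) (hE1 : E1 = ⋃ R ∈ Fbar, (DyadicCube.parent R).toSet) :
    ENNReal.ofReal β⁻¹ * volume E ≤ volume E1 ∨
      (volume (unitCube n).toSet < ENNReal.ofReal β⁻¹ * volume E ∧
        E1 = (unitCube n).toSet) := by
  obtain ⟨hβ0, hβ1⟩ := hβ
  set P : DyadicCube n → Prop := fun R => ENNReal.ofReal β * volume R.toSet < volume (R.toSet ∩ E)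
  replace hFbar : Fbar = {R | DyadicCube.IsMaximal P R} := hFbar
  subst hFbar hE1
  have hEQ₀ : E ⊆ (unitCube n).toSet := hE ▸ Set.iUnion₂_subset fun Q _ => Q.toSet_subset_unitCube
  rw [ENNReal.ofReal_inv_of_pos hβ0, ← ENNReal.div_eq_inv_mul]
  by_cases hQ₀ : P (unitCube n)
  · refine .inr ⟨?_, DyadicCube.biUnion_parent_isMaximal_eq_unitCube hQ₀⟩
    rw [ENNReal.lt_div_iff_mul_lt (by simp [hβ0]) (by simp), mul_comm]
    simpa [P, Set.inter_eq_right.mpr hEQ₀] using hQ₀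
  have hEE1 : E ⊆ ⋃ R ∈ {R | DyadicCube.IsMaximal P R}, R.parent.toSet :=
    hE ▸ DyadicCube.biUnion_subset_biUnion_parent_isMaximal fun Q hQ =>
      DyadicCube.ofReal_mul_volume_lt_volume_inter hβ1 (hE ▸ Set.subset_biUnion_of_mem hQ)
  have hparent (R : DyadicCube n) (hR : DyadicCube.IsMaximal P R) :
      volume (E ∩ R.parent.toSet) ≤ ENNReal.ofReal β * volume R.parent.toSet := by
    rw [Set.inter_comm]
    refine not_lt.mp fun hp => hQ₀ ?_
    simpa only [P, hR.toSet_eq_unitCube_of_parent hp] using hR.1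
  rw [← Set.biUnion_image (g := DyadicCube.toSet)] at hEE1 ⊢
  refine .inl (ENNReal.div_le_of_le_mul ?_)
  rw [mul_comm]
  exact DyadicCube.volume_le_mul_volume_biUnion hEE1 (Set.forall_mem_image.mpr hparent)

/-- **Lemma of Nadirashvili on dyadic cubes.**
Let `Q₀` be (WLOG) the unit cube, `F` a finite family of pairwise disjoint dyadic
subcubes of `Q₀`, `β ∈ (0,1)`, `E = ⋃_{Q ∈ F} Q`. Let `F̄` be the family of maximal
dyadic cubes `R` with `|R ∩ E| > β |R|`, and `E₁` the union of the dyadic parents of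
the cubes of `F̄`. Then either `|E₁| ≥ β⁻¹ |E|`, or `β⁻¹|E| > |Q₀|` and `E₁ = Q₀`. -/
theorem dyadic_lemma (n : ℕ) (β : ℝ) (hβ : β ∈ Set.Ioo (0:ℝ) 1)
    (F : Finset (DyadicCube n))
    (hdisj : (F : Set (DyadicCube n)).Pairwise
      (fun Q Q' => Disjoint Q.toSet Q'.toSet))
    (E : Set (Fin n → ℝ)) (hE : E = ⋃ Q ∈ F, Q.toSet)
    (Fbar : Set (DyadicCube n))
    (hFbar : Fbar = {R : DyadicCube n |
      ENNReal.ofReal β * volume R.toSet < volume (R.toSet ∩ E) ∧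
      ∀ R' : DyadicCube n, R.toSet ⊆ R'.toSet →
        ENNReal.ofReal β * volume R'.toSet < volume (R'.toSet ∩ E) →
        R'.toSet = R.toSet})
    (E1 : Set (Fin n → ℝ)) (hE1 : E1 = ⋃ R ∈ Fbar, (DyadicCube.parent R).toSet) :
    ENNReal.ofReal β⁻¹ * volume E ≤ volume E1 ∨
      (volume (unitCube n).toSet < ENNReal.ofReal β⁻¹ * volume E ∧
        E1 = (unitCube n).toSet) :=
  dyadic_lemma_general n β hβ F E hE Fbar hFbar E1 hE1
end

section
/- Let $F_1 \subset \mathbb{R}^n$ be a nonempty closed set, $x_0 \in F_1$, and suppose $\int_{|y| \le 1} \frac{\mathrm{dist}(x_0 + y, F_1)}{|y|^{n+1}}\, dy < \infty$. Define $h(r) = \max_{|y| = r} \mathrm{dist}(x_0 + y, F_1)$ for $r \in (0, r_1)$, for some $r_1 \in (0,1)$. Then $\int_0^{r_1} \frac{h(r)^n}{r^{n+1}}\, dr < \infty$. -/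
/-!
Write `f y = dist (x₀ + y, F₁)`: it is 1-Lipschitz and vanishes at `0`, so `h` is 1-Lipschitz on
`(0, ∞)` and `h r ≤ r`. Fix `b` with `h b > 0` and a maximiser `y` on the sphere of radius `b`.
On a ball around `y` of radius comparable to `h b` (small enough to stay in the unit ball),
`f ≥ h b / 2` and `‖z‖ ≤ 2 b`, so this ball carries at least a constant times `h(b)ⁿ⁺¹ / bⁿ⁺¹`
of the Marcinkiewicz integral, while the radial integral over `[b - h b / 2, b + h b / 2]` is at
most a constant times the same quantity. A Vitali covering of `{r : h r > 0}` by these intervals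
has disjoint `(h b / 8)`-neighbourhoods; the balls then lie in disjoint annuli, and summing the
two bounds over the covering compares the radial integral with the Marcinkiewicz integral.
-/

open MeasureTheory Set Metric Module TopologicalSpace
open scoped ENNReal

noncomputable def sphereSup {E : Type*} [NormedAddCommGroup E] (f : E → ℝ) (r : ℝ) : ℝ :=
  sSup (f '' sphere (0 : E) r)

section SphereSup

variable {E : Type*} [NormedAddCommGroup E] [ProperSpace E] {f : E → ℝ}

theorem le_sphereSup (hf : Continuous f) (z : E) : f z ≤ sphereSup f ‖z‖ :=
  le_csSup ((isCompact_sphere 0 _).image hf).bddAbove ⟨z, by simp, rfl⟩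

variable [NormedSpace ℝ E] [Nontrivial E]

theorem exists_norm_eq_sphereSup (hf : Continuous f) {r : ℝ} (hr : 0 ≤ r) :
    ∃ y : E, ‖y‖ = r ∧ f y = sphereSup f r := by
  obtain ⟨y, hy, hfy⟩ := ((isCompact_sphere 0 r).image hf).sSup_mem
    ((NormedSpace.sphere_nonempty.2 hr).image f)
  exact ⟨y, by simpa using hy, hfy⟩

theorem sphereSup_nonneg (hf : Continuous f) (hf₀ : ∀ z, 0 ≤ f z) {r : ℝ} (hr : 0 ≤ r) :
    0 ≤ sphereSup f r := by
  obtain ⟨y, -, hy⟩ := exists_norm_eq_sphereSup hf hr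
  exact hy ▸ hf₀ y

theorem sphereSup_le_self (hf : LipschitzWith 1 f) (hf0 : f 0 = 0) {r : ℝ} (hr : 0 ≤ r) :
    sphereSup f r ≤ r := by
  obtain ⟨y, hy, hfy⟩ := exists_norm_eq_sphereSup hf.continuous hr
  rw [← hfy, ← hy]
  simpa [hf0] using hf.le_add_mul y 0

theorem sphereSup_le_add_abs_sub (hf : LipschitzWith 1 f) {r s : ℝ} (hr : 0 < r) (hs : 0 ≤ s) :
    sphereSup f r ≤ sphereSup f s + |r - s| := by
  obtain ⟨y, hy, hfy⟩ := exists_norm_eq_sphereSup hf.continuous hr.le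
  have hy' : ‖(s / r) • y‖ = s := by
    rw [norm_smul, hy, Real.norm_of_nonneg (div_nonneg hs hr.le), div_mul_cancel₀ _ hr.ne']
  have hyy' : dist y ((s / r) • y) = |r - s| := by
    rw [dist_eq_norm, show y - (s / r) • y = (1 - s / r) • y by rw [sub_smul, one_smul],
      norm_smul, hy, Real.norm_eq_abs, one_sub_div hr.ne', abs_div, abs_of_pos hr,
      div_mul_cancel₀ _ hr.ne']
  calc sphereSup f r = f y := hfy.symm
    _ ≤ f ((s / r) • y) + dist y ((s / r) • y) := by simpa using hf.le_add_mul y ((s / r) • y)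
    _ ≤ sphereSup f s + |r - s| := by
      rw [hyy']
      gcongr
      simpa [hy'] using le_sphereSup hf.continuous ((s / r) • y)

theorem lipschitzOnWith_sphereSup (hf : LipschitzWith 1 f) :
    LipschitzOnWith 1 (sphereSup f) (Ioi 0) :=
  LipschitzOnWith.of_le_add fun _ hr _ hs => by
    rw [Real.dist_eq]
    exact sphereSup_le_add_abs_sub hf hr (le_of_lt hs)

end SphereSup

theorem setLIntegral_le_mul_of_vitali {α : Type*} [PseudoMetricSpace α] [SeparableSpace α]
    [MeasurableSpace α] (μ : Measure α) {U : Set α} {δ : α → ℝ} {R : ℝ}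
    (hδ : ∀ a ∈ U, 0 < δ a) (hδR : ∀ a ∈ U, δ a ≤ R) {g w : α → ℝ≥0∞} {C K : ℝ≥0∞}
    (hloc : ∀ b ∈ U, ∫⁻ x in closedBall b (4 * δ b), g x ∂μ ≤ C * w b)
    (hdisj : ∀ u ⊆ U, u.Countable → u.PairwiseDisjoint (fun b => closedBall b (δ b)) →
      ∑' b : u, w b ≤ K) :
    ∫⁻ x in U, g x ∂μ ≤ C * K := by
  obtain ⟨u, huU, hu_disj, hu_cov⟩ :=
    Vitali.exists_disjoint_subfamily_covering_enlargement_closedBall U id δ R hδR 4 (by norm_num)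
  have hu_count : u.Countable := hu_disj.countable_of_nonempty_interior fun b hb =>
    ⟨b, ball_subset_interior_closedBall (mem_ball_self (hδ b (huU hb)))⟩
  have : Countable u := hu_count.to_subtype
  calc ∫⁻ x in U, g x ∂μ ≤ ∫⁻ x in ⋃ b : u, closedBall (b : α) (4 * δ b), g x ∂μ :=
        lintegral_mono_set fun a ha => by
          obtain ⟨b, hb, hab⟩ := hu_cov a ha
          exact mem_iUnion.2 ⟨⟨b, hb⟩, hab (mem_closedBall_self (hδ a ha).le)⟩
    _ ≤ ∑' b : u, ∫⁻ x in closedBall (b : α) (4 * δ b), g x ∂μ := lintegral_iUnion_le _ _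
    _ ≤ ∑' b : u, C * w b := ENNReal.tsum_le_tsum fun b => hloc b (huU b.2)
    _ = C * ∑' b : u, w b := ENNReal.tsum_mul_left
    _ ≤ C * K := by gcongr; exact hdisj u huU hu_count hu_disj

theorem setLIntegral_le_setLIntegral_of_eq_zero {α : Type*} [MeasurableSpace α] {μ : Measure α}
    {s t : Set α} {g : α → ℝ≥0∞} (hs : MeasurableSet s) (hg : ∀ x ∈ s, x ∉ t → g x = 0) :
    ∫⁻ x in s, g x ∂μ ≤ ∫⁻ x in t, g x ∂μ :=
  calc ∫⁻ x in s, g x ∂μ ≤ ∫⁻ x in s, t.indicator g x ∂μ :=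
        setLIntegral_mono' hs fun x hx => by
          by_cases hxt : x ∈ t
          · simp [hxt]
          · simp [hxt, hg x hx hxt]
    _ ≤ ∫⁻ x, t.indicator g x ∂μ := setLIntegral_le_lintegral _ _
    _ ≤ ∫⁻ x in t, g x ∂μ := lintegral_indicator_le _ _

theorem lintegral_closedBall_le_of_lipschitzOnWith {h : ℝ → ℝ} (hh : LipschitzOnWith 1 h (Ioi 0))
    (hh₀ : ∀ r, 0 < r → 0 ≤ h r) {b ρ : ℝ} (hb : 0 < b) (hhb : h b ≤ b) (hρ : ρ ≤ h b / 2)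
    (m p : ℕ) :
    ∫⁻ r in closedBall b ρ, ENNReal.ofReal (h r ^ m / r ^ p)
      ≤ ENNReal.ofReal ((3 / 2) ^ m * 2 ^ p) * ENNReal.ofReal (h b ^ (m + 1) / b ^ p) := by
  have hb₀ : 0 ≤ h b := hh₀ b hb
  have hpt : ∀ r ∈ closedBall b ρ,
      ENNReal.ofReal (h r ^ m / r ^ p) ≤ ENNReal.ofReal ((3 / 2 * h b) ^ m / (b / 2) ^ p) := by
    intro r hr
    obtain ⟨hbr, hrb⟩ := abs_le.1 (mem_closedBall.1 hr)
    have hr₀ : 0 < r := by linarith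
    have hhr : h r ≤ h b + dist r b := by simpa using hh.le_add_mul hr₀ hb
    have hr_dist : dist r b ≤ ρ := hr
    exact ENNReal.ofReal_le_ofReal <| div_le_div₀ (by positivity)
      (pow_le_pow_left₀ (hh₀ r hr₀) (by linarith) m) (by positivity)
      (pow_le_pow_left₀ (by positivity) (by linarith) p)
  calc ∫⁻ r in closedBall b ρ, ENNReal.ofReal (h r ^ m / r ^ p)
      ≤ ∫⁻ _ in closedBall b ρ, ENNReal.ofReal ((3 / 2 * h b) ^ m / (b / 2) ^ p) :=
        setLIntegral_mono' measurableSet_closedBall hpt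
    _ = ENNReal.ofReal ((3 / 2 * h b) ^ m / (b / 2) ^ p * (2 * ρ)) := by
        rw [setLIntegral_const, Real.volume_closedBall, ← ENNReal.ofReal_mul (by positivity)]
    _ ≤ ENNReal.ofReal ((3 / 2 * h b) ^ m / (b / 2) ^ p * h b) := by gcongr; linarith
    _ = ENNReal.ofReal ((3 / 2) ^ m * 2 ^ p) * ENNReal.ofReal (h b ^ (m + 1) / b ^ p) := by
        rw [← ENNReal.ofReal_mul (by positivity)]
        congr 1
        rw [div_pow, mul_pow]
        field_simp
        ring

section Kernel

variable {E : Type*} [NormedAddCommGroup E] [MeasurableSpace E] [OpensMeasurableSpace E]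
  (μ : Measure E) {f : E → ℝ}

theorem ofReal_mul_measure_le_lintegral_closedBall (hf : LipschitzWith 1 f) {y : E} {ρ : ℝ}
    (hfy : 0 < f y) (hfy' : f y ≤ ‖y‖) (hρ : ρ ≤ f y / 2) (p : ℕ) :
    ENNReal.ofReal (f y / 2 / (2 * ‖y‖) ^ p) * μ (closedBall y ρ)
      ≤ ∫⁻ z in closedBall y ρ, ENNReal.ofReal (f z / ‖z‖ ^ p) ∂μ := by
  rw [← setLIntegral_const]
  refine setLIntegral_mono' measurableSet_closedBall fun z hz => ?_
  have hzy : ‖z - y‖ ≤ ρ := by rwa [← dist_eq_norm]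
  have hfz : f y ≤ f z + ‖y - z‖ := by simpa [dist_eq_norm] using hf.le_add_mul y z
  have hz_le : ‖z‖ ≤ ‖y‖ + ‖z - y‖ := norm_le_norm_add_norm_sub' z y
  have hz_ge : ‖y‖ - ‖z - y‖ ≤ ‖z‖ := by linarith [norm_sub_norm_le y z, norm_sub_rev y z]
  rw [norm_sub_rev] at hfz
  exact ENNReal.ofReal_le_ofReal <| div_le_div₀ (by linarith) (by linarith)
    (pow_pos (by linarith) p) (pow_le_pow_left₀ (by positivity) (by linarith) p)

end Kernel

section AddHaar

variable {E : Type*} [NormedAddCommGroup E] [NormedSpace ℝ E] [FiniteDimensional ℝ E]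
  [Nontrivial E] [MeasurableSpace E] [BorelSpace E] (μ : Measure E) [μ.IsAddHaarMeasure]
  {f : E → ℝ}

theorem exists_lintegral_closedBall_ge_sphereSup (hf : LipschitzWith 1 f) (hf0 : f 0 = 0)
    {c : ℝ} (hc : 0 < c) (hc2 : c ≤ 1 / 2) {b : ℝ} (hb : 0 < b) (hs : 0 < sphereSup f b)
    (p : ℕ) :
    ∃ y : E, ‖y‖ = b ∧
      ENNReal.ofReal (c ^ finrank ℝ E / 2 ^ (p + 1)) * μ (ball 0 1) *
          ENNReal.ofReal (sphereSup f b ^ (finrank ℝ E + 1) / b ^ p)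
        ≤ ∫⁻ z in closedBall y (c * sphereSup f b), ENNReal.ofReal (f z / ‖z‖ ^ p) ∂μ := by
  obtain ⟨y, hy, hfy⟩ := exists_norm_eq_sphereSup hf.continuous hb.le
  refine ⟨y, hy, le_trans (le_of_eq ?_) <|
    ofReal_mul_measure_le_lintegral_closedBall μ hf (ρ := c * sphereSup f b) (hfy ▸ hs)
      (by rw [hfy, hy]; exact sphereSup_le_self hf hf0 hb.le) (by rw [hfy]; nlinarith) p⟩
  rw [hfy, hy, Measure.addHaar_closedBall μ y (by positivity), mul_right_comm, ← mul_assoc,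
    ← ENNReal.ofReal_mul (by positivity), ← ENNReal.ofReal_mul (by positivity)]
  congr 2
  field_simp
  ring

theorem ofReal_mul_tsum_sphereSup_le_lintegral (hf : LipschitzWith 1 f) (hf0 : f 0 = 0)
    {c R : ℝ} (hc : 0 < c) (hc8 : c ≤ 1 / 8) {u : Set ℝ} (hu : u.Countable)
    (hu₀ : ∀ b ∈ u, 0 < b) (hus : ∀ b ∈ u, 0 < sphereSup f b)
    (huR : ∀ b ∈ u, b + c * sphereSup f b ≤ R)
    (hdisj : u.PairwiseDisjoint fun b => closedBall b (sphereSup f b / 8)) (p : ℕ) :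
    ENNReal.ofReal (c ^ finrank ℝ E / 2 ^ (p + 1)) * μ (ball 0 1) *
        ∑' b : u, ENNReal.ofReal (sphereSup f b ^ (finrank ℝ E + 1) / b ^ p)
      ≤ ∫⁻ z in closedBall 0 R, ENNReal.ofReal (f z / ‖z‖ ^ p) ∂μ := by
  have : Countable u := hu.to_subtype
  choose y hy hle using fun b : u =>
    exists_lintegral_closedBall_ge_sphereSup μ hf hf0 hc (by linarith) (hu₀ b b.2) (hus b b.2) p
  set B := fun b : u => closedBall (y b) (c * sphereSup f b)
  have hB_norm : ∀ b : u, B b ⊆ norm ⁻¹' closedBall (b : ℝ) (sphereSup f b / 8) := by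
    intro b z hz
    have hzy : ‖z - y b‖ ≤ c * sphereSup f b := by rwa [← dist_eq_norm]
    have hcs : c * sphereSup f b ≤ sphereSup f b / 8 := by nlinarith [hus b b.2]
    calc dist ‖z‖ b = |‖z‖ - ‖y b‖| := by rw [Real.dist_eq, hy]
      _ ≤ ‖z - y b‖ := abs_norm_sub_norm_le z (y b)
      _ ≤ sphereSup f b / 8 := hzy.trans hcs
  have hB_disj : Pairwise (Function.onFun Disjoint B) := fun i j hij =>
    ((hdisj i.2 j.2 (Subtype.coe_ne_coe.2 hij)).preimage norm).mono (hB_norm i) (hB_norm j)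
  have hB_sub : ⋃ b, B b ⊆ closedBall 0 R := iUnion_subset fun b z hz => by
    have hzy : ‖z - y b‖ ≤ c * sphereSup f b := by rwa [← dist_eq_norm]
    rw [mem_closedBall_zero_iff]
    linarith [norm_le_norm_add_norm_sub' z (y b), hy b, huR b b.2]
  calc _ = ∑' b : u, ENNReal.ofReal (c ^ finrank ℝ E / 2 ^ (p + 1)) * μ (ball 0 1) *
          ENNReal.ofReal (sphereSup f b ^ (finrank ℝ E + 1) / b ^ p) :=
        ENNReal.tsum_mul_left.symm
    _ ≤ ∑' b : u, ∫⁻ z in B b, ENNReal.ofReal (f z / ‖z‖ ^ p) ∂μ := ENNReal.tsum_le_tsum hle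
    _ = ∫⁻ z in ⋃ b, B b, ENNReal.ofReal (f z / ‖z‖ ^ p) ∂μ :=
        (lintegral_iUnion (fun _ => measurableSet_closedBall) hB_disj _).symm
    _ ≤ _ := lintegral_mono_set hB_sub

theorem lintegral_sphereSup_pow_div_lt_top (hf : LipschitzWith 1 f) (hf0 : f 0 = 0)
    (hf₀ : ∀ z, 0 ≤ f z)
    (hM : ∫⁻ z in closedBall 0 1, ENNReal.ofReal (f z / ‖z‖ ^ (finrank ℝ E + 1)) ∂μ ≠ ∞)
    {r₁ : ℝ} (hr₁ : r₁ ∈ Ioo 0 1) :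
    ∫⁻ r in Ioo 0 r₁, ENNReal.ofReal (sphereSup f r ^ finrank ℝ E / r ^ (finrank ℝ E + 1))
      < ∞ := by
  set d := finrank ℝ E
  have hd : d ≠ 0 := finrank_pos.ne'
  have hh₀ : ∀ r, 0 < r → 0 ≤ sphereSup f r :=
    fun r hr => sphereSup_nonneg hf.continuous hf₀ hr.le
  set c : ℝ := min (1 / 8) (1 - r₁)
  have hc : 0 < c := lt_min (by norm_num) (by linarith [hr₁.2])
  set κ := ENNReal.ofReal (c ^ d / 2 ^ (d + 2)) * μ (ball 0 1)
  have hκ : κ ≠ 0 :=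
    mul_ne_zero (ENNReal.ofReal_pos.2 (by positivity)).ne' (measure_ball_pos _ _ one_pos).ne'
  set U := {r ∈ Ioo 0 r₁ | 0 < sphereSup f r}
  calc ∫⁻ r in Ioo 0 r₁, ENNReal.ofReal (sphereSup f r ^ d / r ^ (d + 1))
      ≤ ∫⁻ r in U, ENNReal.ofReal (sphereSup f r ^ d / r ^ (d + 1)) :=
        setLIntegral_le_setLIntegral_of_eq_zero measurableSet_Ioo fun r hr hrU => by
          have : sphereSup f r = 0 := le_antisymm (not_lt.1 fun h => hrU ⟨hr, h⟩) (hh₀ r hr.1)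
          simp [this, zero_pow hd]
    _ ≤ ENNReal.ofReal ((3 / 2) ^ d * 2 ^ (d + 1)) *
          ((∫⁻ z in closedBall 0 1, ENNReal.ofReal (f z / ‖z‖ ^ (d + 1)) ∂μ) / κ) := by
      refine setLIntegral_le_mul_of_vitali volume (δ := fun b => sphereSup f b / 8) (R := 1)
        (w := fun b => ENNReal.ofReal (sphereSup f b ^ (d + 1) / b ^ (d + 1)))
        (fun a ha => by linarith [ha.2]) (fun a ha => ?_) (fun b hb => ?_)
        fun u huU hu hdisj => ?_
      · linarith [sphereSup_le_self hf hf0 ha.1.1.le, ha.1.2, hr₁.2]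
      · exact lintegral_closedBall_le_of_lipschitzOnWith (lipschitzOnWith_sphereSup hf) hh₀
          hb.1.1 (sphereSup_le_self hf hf0 hb.1.1.le) (by linarith) d (d + 1)
      · rw [ENNReal.le_div_iff_mul_le (Or.inl hκ) (Or.inr hM), mul_comm]
        refine ofReal_mul_tsum_sphereSup_le_lintegral μ hf hf0 hc (min_le_left _ _) hu
          (fun b hb => (huU hb).1.1) (fun b hb => (huU hb).2) (fun b hb => ?_) hdisj (d + 1)
        obtain ⟨⟨hb₀, hb₁⟩, -⟩ := huU hb
        nlinarith [sphereSup_le_self hf hf0 hb₀.le, min_le_right (1 / 8 : ℝ) (1 - r₁), hh₀ b hb₀,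
          hr₁.2]
    _ < ∞ := ENNReal.mul_lt_top ENNReal.ofReal_lt_top (ENNReal.div_lt_top hM hκ)

theorem integrableOn_sphereSup_pow_div (hf : LipschitzWith 1 f) (hf0 : f 0 = 0)
    (hf₀ : ∀ z, 0 ≤ f z)
    (hint : IntegrableOn (fun z => f z / ‖z‖ ^ (finrank ℝ E + 1)) (closedBall 0 1) μ)
    {r₁ : ℝ} (hr₁ : r₁ ∈ Ioo 0 1) :
    IntegrableOn (fun r => sphereSup f r ^ finrank ℝ E / r ^ (finrank ℝ E + 1)) (Ioo 0 r₁) := by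
  have hcont : ContinuousOn (fun r => sphereSup f r ^ finrank ℝ E / r ^ (finrank ℝ E + 1))
      (Ioo 0 r₁) :=
    (((lipschitzOnWith_sphereSup hf).continuousOn.mono Ioo_subset_Ioi_self).pow _).div
      (continuousOn_pow _) fun r hr => pow_ne_zero _ hr.1.ne'
  have hnn : ∀ r ∈ Ioo (0 : ℝ) r₁, 0 ≤ sphereSup f r ^ finrank ℝ E / r ^ (finrank ℝ E + 1) :=
    fun r hr => div_nonneg (pow_nonneg (sphereSup_nonneg hf.continuous hf₀ hr.1.le) _)
      (pow_nonneg hr.1.le _)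
  have hM := (lt_of_le_of_lt (lintegral_mono fun z => Real.ofReal_le_enorm _) hint.2).ne
  exact ⟨hcont.aestronglyMeasurable measurableSet_Ioo,
    (hasFiniteIntegral_iff_ofReal (ae_restrict_of_forall_mem measurableSet_Ioo hnn)).2
      (lintegral_sphereSup_pow_div_lt_top μ hf hf0 hf₀ hM hr₁)⟩

end AddHaar

theorem marcinkiewicz_radial_general (n : ℕ) (hn : 1 ≤ n)
    (F₁ : Set (EuclideanSpace ℝ (Fin n)))
    (x₀ : EuclideanSpace ℝ (Fin n)) (hx₀ : x₀ ∈ F₁)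
    (hMar : IntegrableOn
      (fun y => Metric.infDist (x₀ + y) F₁ / ‖y‖ ^ (n + 1))
      (Metric.closedBall (0 : EuclideanSpace ℝ (Fin n)) 1))
    (r₁ : ℝ) (hr₁ : r₁ ∈ Set.Ioo (0:ℝ) 1)
    (h : ℝ → ℝ)
    (hh : ∀ r : ℝ, h r = sSup ((fun y => Metric.infDist (x₀ + y) F₁) ''
      Metric.sphere (0 : EuclideanSpace ℝ (Fin n)) r)) :
    IntegrableOn (fun r : ℝ => h r ^ n / r ^ (n + 1)) (Set.Ioo (0:ℝ) r₁) := by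
  have : Nonempty (Fin n) := ⟨⟨0, hn⟩⟩
  obtain rfl : h = sphereSup fun y => infDist (x₀ + y) F₁ := funext hh
  have hf : LipschitzWith 1 fun y : EuclideanSpace ℝ (Fin n) => infDist (x₀ + y) F₁ := by
    simpa [Function.comp_def] using (lipschitz_infDist_pt F₁).comp (isometry_vadd _ x₀).lipschitz
  simpa using integrableOn_sphereSup_pow_div volume hf (by simp [infDist_zero_of_mem hx₀])
    (fun _ => infDist_nonneg) (by simpa using hMar) hr₁

/-- **From the Marcinkiewicz integral to a radial integral bound.**
Let `F₁ ⊂ ℝⁿ` be a nonempty closed set, `x₀ ∈ F₁`, and suppose the Marcinkiewicz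
integral `∫_{|y| ≤ 1} dist(x₀+y, F₁)/|y|^{n+1} dy` is finite. With
`h(r) = max_{|y| = r} dist(x₀+y, F₁)`, one has `∫₀^{r₁} h(r)ⁿ/r^{n+1} dr < ∞`. -/
theorem marcinkiewicz_radial (n : ℕ) (hn : 1 ≤ n)
    (F₁ : Set (EuclideanSpace ℝ (Fin n))) (hcl : IsClosed F₁) (hne : F₁.Nonempty)
    (x₀ : EuclideanSpace ℝ (Fin n)) (hx₀ : x₀ ∈ F₁)
    (hMar : IntegrableOn
      (fun y => Metric.infDist (x₀ + y) F₁ / ‖y‖ ^ (n + 1))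
      (Metric.closedBall (0 : EuclideanSpace ℝ (Fin n)) 1))
    (r₁ : ℝ) (hr₁ : r₁ ∈ Set.Ioo (0:ℝ) 1)
    (h : ℝ → ℝ)
    (hh : ∀ r : ℝ, h r = sSup ((fun y => Metric.infDist (x₀ + y) F₁) ''
      Metric.sphere (0 : EuclideanSpace ℝ (Fin n)) r)) :
    IntegrableOn (fun r : ℝ => h r ^ n / r ^ (n + 1)) (Set.Ioo (0:ℝ) r₁) :=
  marcinkiewicz_radial_general n hn F₁ x₀ hx₀ hMar r₁ hr₁ h hh
end
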